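/- Let 1 ≤ i ≤ n−1 and 1 ≤ k ≤ h < l ≤ n with h ≤ i. Then in the set whose minimum defines α_i, all terms R_{i+1}−R_j+d_j corresponding to indices k ≤ j ≤ h may be replaced by the single term R_{i+1} − R_{h+1} + α'_{h−k+1}(k,l) without changing the minimum. In particular (taking k = 1, l = n), all terms with 1 ≤ j ≤ h may be replaced by R_{i+1} − R_{h+1} + α_h. -/

import Mathlib

/-!
Combinatorial setting abstracting a good BONG over a dyadic local field.
`R : ℕ → ℤ` are the orders `R_i = ord a_i` (indices `1,…,n` used),
`d : ℕ → EReal` are the values `d_j = d(-a_j a_{j+1}) ∈ ℕ ∪ {∞}`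
(the allowed values are encoded in condition (G3) below).
-/

/-- The term `(R_{i+1} - R_i)/2 + e` appearing in the definition of `α_i`. -/
noncomputable def halfTerm (e : ℤ) (R : ℕ → ℤ) (i : ℕ) : EReal :=
  (((R (i + 1) - R i : ℝ) / 2 + (e : ℝ) : ℝ) : EReal)

/-- The set whose minimum defines `α_i`. -/
noncomputable def alphaSet (e : ℤ) (n : ℕ) (R : ℕ → ℤ) (d : ℕ → EReal) (i : ℕ) :
    Set EReal :=
  {halfTerm e R i}
    ∪ {x | ∃ j, 1 ≤ j ∧ j ≤ i ∧ x = ((R (i + 1) - R j : ℝ) : EReal) + d j}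
    ∪ {x | ∃ j, i ≤ j ∧ j + 1 ≤ n ∧ x = ((R (j + 1) - R i : ℝ) : EReal) + d j}

/-- The invariant `α_i = α_i(L)`, for `1 ≤ i ≤ n - 1`. -/
noncomputable def alpha (e : ℤ) (n : ℕ) (R : ℕ → ℤ) (d : ℕ → EReal) (i : ℕ) : EReal :=
  sInf (alphaSet e n R d i)

/-- `α'_m(k,l)`: the `α`-invariant of the truncated data `R_k,…,R_l`, `d_k,…,d_{l-1}`. -/
noncomputable def alphaT (e : ℤ) (R : ℕ → ℤ) (d : ℕ → EReal) (k l m : ℕ) : EReal :=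
  alpha e (l - k + 1) (fun j => R (k + j - 1)) (fun j => d (k + j - 1)) m

/-- Conditions (G1)-(G4) on the data `(e, n, R, d)`, abstracting a good BONG. -/
structure GoodBONG (e : ℤ) (n : ℕ) (R : ℕ → ℤ) (d : ℕ → EReal) : Prop where
  he : 1 ≤ e
  hn : 2 ≤ n
  g1 : ∀ i, 1 ≤ i → i + 2 ≤ n → R i ≤ R (i + 2)
  g2a : ∀ j, 1 ≤ j → j + 1 ≤ n → 0 ≤ R (j + 1) - R j + 2 * e
  g2b : ∀ j, 1 ≤ j → j + 1 ≤ n → 0 ≤ ((R (j + 1) - R j : ℝ) : EReal) + d j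
  g3 : ∀ j, 1 ≤ j → j + 1 ≤ n →
    d j = 0 ∨ (∃ m : ℕ, Odd m ∧ (m : ℤ) ≤ 2 * e - 1 ∧ d j = ((m : ℝ) : EReal)) ∨
      d j = (((2 * e : ℤ) : ℝ) : EReal) ∨ d j = ⊤
  g4odd : ∀ j, 1 ≤ j → j + 1 ≤ n → Odd (R (j + 1) - R j) →
    0 < R (j + 1) - R j ∧ d j = 0
  g4even : ∀ j, 1 ≤ j → j + 1 ≤ n → Even (R (j + 1) - R j) → 0 < d j

/-!
Write `c = R_{i+1} - R_{h+1}`. Condition (G1) makes `j ↦ R_j + R_{j+1}` nondecreasing, and this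
is all that is needed: translating the set defining `α'_{h-k+1}(k,l)` by `c`, its middle terms
become exactly the replaced terms `R_{i+1} - R_j + d_j` (`k ≤ j ≤ h`), while its half term and
its right terms `R_{j+1} - R_h + d_j` (`h ≤ j < l`) dominate the half term of `α_i`, resp. the
term of `α_i` with the same `d_j` (a left term if `j < i`, a right term if `j ≥ i`). Hence
`c + α'_{h-k+1}(k,l)` lies between `α_i` and every replaced term, so the replacement does not
change the minimum.
-/

theorem sInf_eq_sInf_of_replace {α : Type*} [CompleteLattice α] {S T : Set α} {y : α}
    (hy : y ∈ T) (hSy : sInf S ≤ y) (hT : ∀ x ∈ T, x ∈ S ∨ x = y)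
    (hS : ∀ x ∈ S, x ∈ T ∨ y ≤ x) : sInf S = sInf T :=
  le_antisymm
    (le_sInf fun x hx => (hT x hx).elim (fun h => sInf_le h) fun h => h ▸ hSy)
    (le_sInf fun x hx => (hS x hx).elim (fun h => sInf_le h) fun h => (sInf_le hy).trans h)

theorem EReal.le_coe_add_sInf {u : EReal} {c : ℝ} {S : Set EReal}
    (h : ∀ t ∈ S, u ≤ c + t) : u ≤ c + sInf S := by
  have hsub : u - c ≤ sInf S := le_sInf fun t ht => EReal.sub_le_of_le_add' (h t ht)
  calc u = u - c + c := EReal.sub_add_cancel.symm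
    _ ≤ sInf S + c := add_le_add_left hsub _
    _ = c + sInf S := add_comm _ _

theorem EReal.coe_add_coe_add (a b : ℝ) (x : EReal) :
    (a : EReal) + ((b : EReal) + x) = ((a + b : ℝ) : EReal) + x := by
  rw [← add_assoc, ← EReal.coe_add]

theorem EReal.coe_add_le_coe_add {a b : ℝ} (h : a ≤ b) (x : EReal) :
    (a : EReal) + x ≤ (b : EReal) + x :=
  add_le_add_left (EReal.coe_le_coe_iff.2 h) x

theorem add_succ_le_add_succ_of_le {n : ℕ} {R : ℕ → ℤ}
    (hR : ∀ i, 1 ≤ i → i + 2 ≤ n → R i ≤ R (i + 2)) {a b : ℕ} (ha : 1 ≤ a) (hab : a ≤ b)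
    (hb : b + 1 ≤ n) : R a + R (a + 1) ≤ R b + R (b + 1) := by
  induction b, hab using Nat.le_induction with
  | base => rfl
  | succ b hab ih =>
    have hb2 : R b ≤ R (b + 1 + 1) := hR b (by omega) (by omega)
    have := ih (by omega)
    omega

def alphaSetOn (e : ℤ) (R : ℕ → ℤ) (d : ℕ → EReal) (k l i : ℕ) : Set EReal :=
  {halfTerm e R i}
    ∪ {x | ∃ j, k ≤ j ∧ j ≤ i ∧ x = ((R (i + 1) - R j : ℝ) : EReal) + d j}
    ∪ {x | ∃ j, i ≤ j ∧ j + 1 ≤ l ∧ x = ((R (j + 1) - R i : ℝ) : EReal) + d j}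

theorem alphaSet_eq_alphaSetOn (e : ℤ) (n : ℕ) (R : ℕ → ℤ) (d : ℕ → EReal) (i : ℕ) :
    alphaSet e n R d i = alphaSetOn e R d 1 n i :=
  rfl

theorem alphaT_eq_sInf_alphaSetOn (e : ℤ) (R : ℕ → ℤ) (d : ℕ → EReal) {k h l : ℕ}
    (hkh : k ≤ h) :
    alphaT e R d k l (h - k + 1) = sInf (alphaSetOn e R d k l h) := by
  have hh : k + (h - k + 1) - 1 = h := by omega
  have hh1 : k + (h - k + 1 + 1) - 1 = h + 1 := by omega
  unfold alphaT alpha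
  congr 1
  ext x
  simp only [alphaSet, alphaSetOn, halfTerm, Set.mem_union, Set.mem_singleton_iff,
    Set.mem_ofPred_eq, hh, hh1]
  refine or_congr (or_congr Iff.rfl ⟨?_, ?_⟩) ⟨?_, ?_⟩
  · rintro ⟨j, hj1, hjh, rfl⟩
    exact ⟨k + j - 1, by omega, by omega, rfl⟩
  · rintro ⟨j, hkj, hjh, rfl⟩
    refine ⟨j - k + 1, by omega, by omega, ?_⟩
    rw [show k + (j - k + 1) - 1 = j by omega]
  · rintro ⟨j, hhj, hjl, rfl⟩
    refine ⟨k + j - 1, by omega, by omega, ?_⟩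
    rw [show k + (j + 1) - 1 = k + j - 1 + 1 by omega]
  · rintro ⟨j, hhj, hjl, rfl⟩
    refine ⟨j - k + 1, by omega, by omega, ?_⟩
    rw [show k + (j - k + 1) - 1 = j by omega, show k + (j - k + 1 + 1) - 1 = j + 1 by omega]

section Replacement

variable {e : ℤ} {n : ℕ} {R : ℕ → ℤ} {d : ℕ → EReal} {i k h l : ℕ}

theorem coe_sub_add_mid_term (j : ℕ) :
    ((R (i + 1) - R (h + 1) : ℝ) : EReal) + (((R (h + 1) - R j : ℝ) : EReal) + d j) =
      ((R (i + 1) - R j : ℝ) : EReal) + d j := by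
  rw [EReal.coe_add_coe_add]
  ring_nf

theorem alpha_le_coe_sub_add_of_mem_alphaSetOn
    (hR : ∀ i, 1 ≤ i → i + 2 ≤ n → R i ≤ R (i + 2)) (hin : i + 1 ≤ n) (hk : 1 ≤ k)
    (hkh : k ≤ h) (hln : l ≤ n) (hhi : h ≤ i) {t : EReal} (ht : t ∈ alphaSetOn e R d k l h) :
    alpha e n R d i ≤ ((R (i + 1) - R (h + 1) : ℝ) : EReal) + t := by
  have hchain : ∀ j, h ≤ j → j + 1 ≤ n → (R h + R (h + 1) : ℝ) ≤ R j + R (j + 1) :=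
    fun j hhj hjn => by exact_mod_cast add_succ_le_add_succ_of_le hR (by omega) hhj hjn
  have hle : ∀ x ∈ alphaSet e n R d i, alpha e n R d i ≤ x := fun x hx => sInf_le hx
  simp only [alphaSetOn, Set.mem_union, Set.mem_singleton_iff, Set.mem_ofPred_eq] at ht
  rcases ht with (rfl | ⟨j, hkj, hjh, rfl⟩) | ⟨j, hhj, hjl, rfl⟩
  · refine (hle _ (Or.inl (Or.inl rfl))).trans ?_
    rw [halfTerm, halfTerm, ← EReal.coe_add, EReal.coe_le_coe_iff]
    linarith [hchain i hhi hin]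
  · rw [coe_sub_add_mid_term]
    exact hle _ (Or.inl (Or.inr ⟨j, by omega, by omega, rfl⟩))
  · rw [EReal.coe_add_coe_add]
    rcases Nat.lt_or_ge j i with hji | hij
    · refine (hle _ (Or.inl (Or.inr ⟨j, by omega, hji.le, rfl⟩))).trans
        (EReal.coe_add_le_coe_add ?_ _)
      linarith [hchain j hhj (by omega)]
    · refine (hle _ (Or.inr ⟨j, hij, by omega, rfl⟩)).trans (EReal.coe_add_le_coe_add ?_ _)
      linarith [hchain i hhi hin]

theorem alpha_eq_sInf_replace_alphaSetOn
    (hR : ∀ i, 1 ≤ i → i + 2 ≤ n → R i ≤ R (i + 2)) (hin : i + 1 ≤ n) (hk : 1 ≤ k)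
    (hkh : k ≤ h) (hln : l ≤ n) (hhi : h ≤ i) :
    alpha e n R d i =
      sInf ({halfTerm e R i}
        ∪ {x | ∃ j, 1 ≤ j ∧ j ≤ i ∧ (j < k ∨ h < j) ∧
            x = ((R (i + 1) - R j : ℝ) : EReal) + d j}
        ∪ {((R (i + 1) - R (h + 1) : ℝ) : EReal) + sInf (alphaSetOn e R d k l h)}
        ∪ {x | ∃ j, i ≤ j ∧ j + 1 ≤ n ∧ x = ((R (j + 1) - R i : ℝ) : EReal) + d j}) := by
  refine sInf_eq_sInf_of_replace (Or.inl (Or.inr rfl)) (EReal.le_coe_add_sInf fun t ht =>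
    alpha_le_coe_sub_add_of_mem_alphaSetOn hR hin hk hkh hln hhi ht) ?_ ?_
  · rintro x (((hx | ⟨j, hj1, hji, -, rfl⟩) | hx) | hx)
    · exact Or.inl (Or.inl (Or.inl hx))
    · exact Or.inl (Or.inl (Or.inr ⟨j, hj1, hji, rfl⟩))
    · exact Or.inr hx
    · exact Or.inl (Or.inr hx)
  · rintro x ((hx | ⟨j, hj1, hji, rfl⟩) | hx)
    · exact Or.inl (Or.inl (Or.inl (Or.inl hx)))
    · by_cases hkjh : k ≤ j ∧ j ≤ h
      · right
        rw [← coe_sub_add_mid_term]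
        gcongr
        exact sInf_le (Or.inl (Or.inr ⟨j, hkjh.1, hkjh.2, rfl⟩))
      · exact Or.inl (Or.inl (Or.inl (Or.inr ⟨j, hj1, hji, by omega, rfl⟩)))
    · exact Or.inl (Or.inr hx)

end Replacement

theorem stmt5_general (e : ℤ) (n : ℕ) (R : ℕ → ℤ) (d : ℕ → EReal)
    (H : GoodBONG e n R d) (i k h l : ℕ)
    (hin : i + 1 ≤ n) (hk : 1 ≤ k) (hkh : k ≤ h)
    (hln : l ≤ n) (hhi : h ≤ i) :
    alpha e n R d i =
      sInf ({halfTerm e R i}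
        ∪ {x | ∃ j, 1 ≤ j ∧ j ≤ i ∧ (j < k ∨ h < j) ∧
            x = ((R (i + 1) - R j : ℝ) : EReal) + d j}
        ∪ {((R (i + 1) - R (h + 1) : ℝ) : EReal) + alphaT e R d k l (h - k + 1)}
        ∪ {x | ∃ j, i ≤ j ∧ j + 1 ≤ n ∧ x = ((R (j + 1) - R i : ℝ) : EReal) + d j}) ∧
    alpha e n R d i =
      sInf ({halfTerm e R i}
        ∪ {x | ∃ j, h < j ∧ j ≤ i ∧ x = ((R (i + 1) - R j : ℝ) : EReal) + d j}
        ∪ {((R (i + 1) - R (h + 1) : ℝ) : EReal) + alpha e n R d h}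
        ∪ {x | ∃ j, i ≤ j ∧ j + 1 ≤ n ∧ x = ((R (j + 1) - R i : ℝ) : EReal) + d j}) := by
  refine ⟨?_, ?_⟩
  · rw [alphaT_eq_sInf_alphaSetOn e R d hkh]
    exact alpha_eq_sInf_replace_alphaSetOn H.g1 hin hk hkh hln hhi
  · rw [alpha_eq_sInf_replace_alphaSetOn (k := 1) (l := n) H.g1 hin le_rfl (hk.trans hkh) le_rfl
      hhi, alpha, alphaSet_eq_alphaSetOn]
    congr 4
    ext x
    constructor
    · rintro ⟨j, hj1, hji, hj, rfl⟩
      exact ⟨j, by omega, hji, rfl⟩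
    · rintro ⟨j, hhj, hji, rfl⟩
      exact ⟨j, by omega, hji, Or.inr hhj, rfl⟩

/-- for `1 ≤ i ≤ n-1` and `1 ≤ k ≤ h < l ≤ n` with `h ≤ i`, in the set
defining `α_i` all terms `R_{i+1} - R_j + d_j` with `k ≤ j ≤ h` may be replaced by the
single term `R_{i+1} - R_{h+1} + α'_{h-k+1}(k,l)`. In particular (for `k = 1`, `l = n`)
all terms with `1 ≤ j ≤ h` may be replaced by `R_{i+1} - R_{h+1} + α_h`. -/
theorem stmt5 (e : ℤ) (n : ℕ) (R : ℕ → ℤ) (d : ℕ → EReal)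
    (H : GoodBONG e n R d) (i k h l : ℕ)
    (hi : 1 ≤ i) (hin : i + 1 ≤ n) (hk : 1 ≤ k) (hkh : k ≤ h) (hhl : h < l)
    (hln : l ≤ n) (hhi : h ≤ i) :
    alpha e n R d i =
      sInf ({halfTerm e R i}
        ∪ {x | ∃ j, 1 ≤ j ∧ j ≤ i ∧ (j < k ∨ h < j) ∧
            x = ((R (i + 1) - R j : ℝ) : EReal) + d j}
        ∪ {((R (i + 1) - R (h + 1) : ℝ) : EReal) + alphaT e R d k l (h - k + 1)}
        ∪ {x | ∃ j, i ≤ j ∧ j + 1 ≤ n ∧ x = ((R (j + 1) - R i : ℝ) : EReal) + d j}) ∧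
    alpha e n R d i =
      sInf ({halfTerm e R i}
        ∪ {x | ∃ j, h < j ∧ j ≤ i ∧ x = ((R (i + 1) - R j : ℝ) : EReal) + d j}
        ∪ {((R (i + 1) - R (h + 1) : ℝ) : EReal) + alpha e n R d h}
        ∪ {x | ∃ j, i ≤ j ∧ j + 1 ≤ n ∧ x = ((R (j + 1) - R i : ℝ) : EReal) + d j}) :=
  stmt5_general e n R d H i k h l hin hk hkh hln hhi
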